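/- arXiv:1409.8167 — 6 statements merged into one kernel-verified Lean document; each statement's English description precedes it below -/
import Mathlib

section
/- Let (A_n)_{n≥1} and (B_n)_{n≥1} be two sequences of real N×N matrices, let 0<λ<μ be reals, C≥1, d>0, and let E,E′,F,F′ be subspaces of ℝ^N with ℝ^N=E⊕E′=F⊕F′ such that whenever u=v+w with (v∈E and w∈E′) or (v∈F and w∈F′), one has max(‖v‖,‖w‖)≤d‖u‖. Fix n>0 and assume: ‖A_n u‖≤Cλ^n‖u‖ for all u∈E; ‖A_n v‖≥C^{-1}μ^n‖v‖ for all v∈E′; ‖B_n u‖≤Cλ^n‖u‖ for all u∈F; and ‖B_n v‖≥C^{-1}μ^n‖v‖ for all v∈F′. Then for every real a>λ and every δ∈(0,1] satisfying (λ/a)^{n+1}<δ≤(λ/a)^n and ‖A_n−B_n‖≤δa^n (operator norm), one has dist(E,F) ≤ (2+d)·C²·(μ/λ)·δ^{log(μ/λ)/log(a/λ)}. -/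
private lemma sideBound {N : ℕ}
    (An Bn : EuclideanSpace ℝ (Fin N) →L[ℝ] EuclideanSpace ℝ (Fin N))
    (lam mu C d δ a : ℝ) (n : ℕ) (hlam : 0 < lam) (hlm : lam < mu) (hC : 1 ≤ C)
    (hd : 0 < d)
    (E F F' : Submodule ℝ (EuclideanSpace ℝ (Fin N)))
    (hFF' : IsCompl F F')
    (hangle : ∀ u v w : EuclideanSpace ℝ (Fin N), u = v + w → v ∈ F → w ∈ F' →
      max ‖v‖ ‖w‖ ≤ d * ‖u‖)
    (hA1 : ∀ u ∈ E, ‖An u‖ ≤ C * lam ^ n * ‖u‖)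
    (hB1 : ∀ u ∈ F, ‖Bn u‖ ≤ C * lam ^ n * ‖u‖)
    (hB2 : ∀ v ∈ F', C⁻¹ * mu ^ n * ‖v‖ ≤ ‖Bn v‖)
    (hAB : ‖An - Bn‖ ≤ δ * a ^ n) (hδa : δ * a ^ n ≤ lam ^ n) :
    ∀ v, v ∈ E → ‖v‖ = 1 →
      Metric.infDist v (F : Set (EuclideanSpace ℝ (Fin N))) ≤
        (2 + d) * C ^ 2 * (lam / mu) ^ n := by
  intro v hv hv1
  have hmu : 0 < mu := hlam.trans hlm
  have hC0 : 0 < C := lt_of_lt_of_le one_pos hC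
  have hlamn : 0 < lam ^ n := pow_pos hlam n
  have hmun : 0 < mu ^ n := pow_pos hmu n
  obtain ⟨f, f', hff', -⟩ := Submodule.existsUnique_add_of_isCompl hFF' v
  have hvd : v = (f : EuclideanSpace ℝ (Fin N)) + f' := hff'.symm
  have hfle : ‖(f : EuclideanSpace ℝ (Fin N))‖ ≤ d := by
    have := hangle v f f' hvd f.2 f'.2
    rw [hv1, mul_one] at this
    exact (le_max_left _ _).trans this
  -- norm of Bn v
  have hBnv : ‖Bn v‖ ≤ C * lam ^ n + lam ^ n := by
    have h1 : ‖An v‖ ≤ C * lam ^ n := by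
      have := hA1 v hv; rwa [hv1, mul_one] at this
    have h2 : ‖An v - Bn v‖ ≤ lam ^ n := by
      have := (An - Bn).le_opNorm v
      rw [hv1, mul_one] at this
      calc ‖An v - Bn v‖ = ‖(An - Bn) v‖ := by simp
        _ ≤ ‖An - Bn‖ := this
        _ ≤ δ * a ^ n := hAB
        _ ≤ lam ^ n := hδa
    calc ‖Bn v‖ = ‖An v - (An v - Bn v)‖ := by congr 1; abel
      _ ≤ ‖An v‖ + ‖An v - Bn v‖ := norm_sub_le _ _
      _ ≤ C * lam ^ n + lam ^ n := add_le_add h1 h2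
  -- norm of Bn f
  have hBnf : ‖Bn (f : EuclideanSpace ℝ (Fin N))‖ ≤ C * lam ^ n * d := by
    calc ‖Bn (f : EuclideanSpace ℝ (Fin N))‖ ≤ C * lam ^ n * ‖(f : EuclideanSpace ℝ (Fin N))‖ :=
        hB1 _ f.2
      _ ≤ C * lam ^ n * d := by
        exact mul_le_mul_of_nonneg_left hfle (by positivity)
  -- lower bound
  have hlow : C⁻¹ * mu ^ n * ‖(f' : EuclideanSpace ℝ (Fin N))‖ ≤
      (2 + d) * C * lam ^ n := by
    have h1 := hB2 _ f'.2
    have heq : (f' : EuclideanSpace ℝ (Fin N)) = v - f := by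
      rw [hvd]; abel
    have h2 : ‖Bn (f' : EuclideanSpace ℝ (Fin N))‖ ≤ C * lam ^ n + lam ^ n + C * lam ^ n * d := by
      calc ‖Bn (f' : EuclideanSpace ℝ (Fin N))‖ = ‖Bn v - Bn f‖ := by rw [heq]; simp
        _ ≤ ‖Bn v‖ + ‖Bn (f : EuclideanSpace ℝ (Fin N))‖ := norm_sub_le _ _
        _ ≤ (C * lam ^ n + lam ^ n) + C * lam ^ n * d := add_le_add hBnv hBnf
    have h3 : C * lam ^ n + lam ^ n + C * lam ^ n * d ≤ (2 + d) * C * lam ^ n := by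
      nlinarith
    exact h1.trans (h2.trans h3)
  have hf' : ‖(f' : EuclideanSpace ℝ (Fin N))‖ ≤ (2 + d) * C ^ 2 * (lam / mu) ^ n := by
    rw [div_pow, mul_div_assoc']
    rw [inv_mul_eq_div, div_mul_eq_mul_div, div_le_iff₀ hC0] at hlow
    rw [le_div_iff₀ hmun]
    nlinarith
  calc Metric.infDist v (F : Set (EuclideanSpace ℝ (Fin N))) ≤ dist v f :=
      Metric.infDist_le_dist_of_mem f.2
    _ = ‖(f' : EuclideanSpace ℝ (Fin N))‖ := by
        rw [dist_eq_norm, hvd]; congr 1; abel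
    _ ≤ (2 + d) * C ^ 2 * (lam / mu) ^ n := hf'

private lemma keyRpow (lam mu a δ : ℝ) (n : ℕ) (hlam : 0 < lam) (hlm : lam < mu)
    (hla : lam < a) (hδ0 : 0 < δ) (h : (lam / a) ^ (n + 1) < δ) :
    (lam / mu) ^ n ≤ (mu / lam) * δ ^ (Real.log (mu / lam) / Real.log (a / lam)) := by
  have hmu : 0 < mu := hlam.trans hlm
  have ha : 0 < a := hlam.trans hla
  set θ := Real.log (mu / lam) / Real.log (a / lam) with hθ
  have hlogml : 0 < Real.log (mu / lam) :=
    Real.log_pos (by rw [lt_div_iff₀ hlam]; linarith)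
  have hlogal : 0 < Real.log (a / lam) :=
    Real.log_pos (by rw [lt_div_iff₀ hlam]; linarith)
  have hθpos : 0 < θ := div_pos hlogml hlogal
  have hbase : (lam / a : ℝ) ^ (θ : ℝ) = lam / mu := by
    rw [Real.rpow_def_of_pos (by positivity)]
    have hlog : Real.log (lam / a) = -Real.log (a / lam) := by
      rw [Real.log_div hlam.ne' ha.ne', Real.log_div ha.ne' hlam.ne']; ring
    rw [hlog, hθ]
    rw [neg_mul, mul_div_assoc', mul_comm, mul_div_assoc, div_self hlogal.ne', mul_one]
    rw [Real.exp_neg, Real.exp_log (by positivity)]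
    rw [inv_div]
  have hmono : ((lam / a) ^ (n + 1) : ℝ) ^ (θ : ℝ) ≤ δ ^ (θ : ℝ) :=
    Real.rpow_le_rpow (by positivity) h.le hθpos.le
  have hcalc : ((lam / a) ^ (n + 1) : ℝ) ^ (θ : ℝ) = (lam / mu) ^ (n + 1) := by
    rw [← Real.rpow_natCast (lam / a) (n + 1), ← Real.rpow_mul (by positivity),
      mul_comm, Real.rpow_mul (by positivity), hbase, Real.rpow_natCast]
  rw [hcalc] at hmono
  have : (lam / mu) ^ n = (mu / lam) * (lam / mu) ^ (n + 1) := by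
    rw [pow_succ']
    rw [← mul_assoc]
    rw [div_mul_div_comm, mul_comm mu lam, div_self (by positivity), one_mul]
  rw [this]
  exact mul_le_mul_of_nonneg_left hmono (by positivity)



private theorem auxMain {N : ℕ}
    (A B : ℕ → EuclideanSpace ℝ (Fin N) →L[ℝ] EuclideanSpace ℝ (Fin N))
    (lam mu C d : ℝ) (hlam : 0 < lam) (hlm : lam < mu) (hC : 1 ≤ C) (hd : 0 < d)
    (E E' F F' : Submodule ℝ (EuclideanSpace ℝ (Fin N)))
    (hEE' : IsCompl E E') (hFF' : IsCompl F F')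
    (hangle : ∀ u v w : EuclideanSpace ℝ (Fin N), u = v + w →
      ((v ∈ E ∧ w ∈ E') ∨ (v ∈ F ∧ w ∈ F')) → max ‖v‖ ‖w‖ ≤ d * ‖u‖)
    (n : ℕ)
    (hA1 : ∀ u ∈ E, ‖A n u‖ ≤ C * lam ^ n * ‖u‖)
    (hA2 : ∀ v ∈ E', C⁻¹ * mu ^ n * ‖v‖ ≤ ‖A n v‖)
    (hB1 : ∀ u ∈ F, ‖B n u‖ ≤ C * lam ^ n * ‖u‖)
    (hB2 : ∀ v ∈ F', C⁻¹ * mu ^ n * ‖v‖ ≤ ‖B n v‖) :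
    ∀ a δ : ℝ, lam < a → 0 < δ → δ ≤ 1 →
      (lam / a) ^ (n + 1) < δ → δ ≤ (lam / a) ^ n →
      ‖A n - B n‖ ≤ δ * a ^ n →
      max (sSup {r : ℝ | ∃ v ∈ E, ‖v‖ = 1 ∧ r = Metric.infDist v (F : Set (EuclideanSpace ℝ (Fin N)))})
      (sSup {r : ℝ | ∃ v ∈ F, ‖v‖ = 1 ∧ r = Metric.infDist v (E : Set (EuclideanSpace ℝ (Fin N)))}) ≤ (2 + d) * C ^ 2 * (mu / lam) *
        δ ^ (Real.log (mu / lam) / Real.log (a / lam)) := by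
  intro a δ hla hδ0 hδ1 hlow hhigh hAB
  have ha : 0 < a := hlam.trans hla
  have han : 0 < a ^ n := pow_pos ha n
  have hδa : δ * a ^ n ≤ lam ^ n := by
    have := mul_le_mul_of_nonneg_right hhigh han.le
    rwa [div_pow, div_mul_cancel₀ _ han.ne'] at this
  have key := keyRpow lam mu a δ n hlam hlm hla hδ0 hlow
  have hrne : 0 ≤ (2 + d) * C ^ 2 * (mu / lam) *
      δ ^ (Real.log (mu / lam) / Real.log (a / lam)) := by
    have := Real.rpow_pos_of_pos hδ0 (Real.log (mu / lam) / Real.log (a / lam))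
    have hmu : 0 < mu := hlam.trans hlm
    positivity
  have hstep : (2 + d) * C ^ 2 * (lam / mu) ^ n ≤ (2 + d) * C ^ 2 * (mu / lam) *
      δ ^ (Real.log (mu / lam) / Real.log (a / lam)) := by
    rw [mul_assoc ((2 + d) * C ^ 2)]
    exact mul_le_mul_of_nonneg_left key (by positivity)
  apply max_le
  · apply Real.sSup_le _ hrne
    rintro r ⟨v, hv, hv1, rfl⟩
    exact le_trans (sideBound (A n) (B n) lam mu C d δ a n hlam hlm hC hd E F F' hFF'
      (fun u x y h hx hy => hangle u x y h (Or.inr ⟨hx, hy⟩)) hA1 hB1 hB2 hAB hδa v hv hv1)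
      hstep
  · apply Real.sSup_le _ hrne
    rintro r ⟨v, hv, hv1, rfl⟩
    have hBA : ‖B n - A n‖ ≤ δ * a ^ n := by rwa [norm_sub_rev]
    exact le_trans (sideBound (B n) (A n) lam mu C d δ a n hlam hlm hC hd F E E' hEE'
      (fun u x y h hx hy => hangle u x y h (Or.inl ⟨hx, hy⟩)) hB1 hA1 hA2 hBA hδa v hv hv1)
      hstep

/-- Distance from a vector to a subspace and between subspaces of Euclidean space:
`dist(E,F) = max( sup{dist(v,F) : v ∈ E, ‖v‖=1}, sup{dist(w,E) : w ∈ F, ‖w‖=1} )`. -/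
noncomputable def subDist {N : ℕ} (E F : Submodule ℝ (EuclideanSpace ℝ (Fin N))) : ℝ :=
  max (sSup {r : ℝ | ∃ v ∈ E, ‖v‖ = 1 ∧ r = Metric.infDist v (F : Set (EuclideanSpace ℝ (Fin N)))})
      (sSup {r : ℝ | ∃ v ∈ F, ‖v‖ = 1 ∧ r = Metric.infDist v (E : Set (EuclideanSpace ℝ (Fin N)))})

theorem holder_estimate_for_expanded_contracted_subspaces {N : ℕ}
    (A B : ℕ → EuclideanSpace ℝ (Fin N) →L[ℝ] EuclideanSpace ℝ (Fin N))
    (lam mu C d : ℝ) (hlam : 0 < lam) (hlm : lam < mu) (hC : 1 ≤ C) (hd : 0 < d)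
    (E E' F F' : Submodule ℝ (EuclideanSpace ℝ (Fin N)))
    (hEE' : IsCompl E E') (hFF' : IsCompl F F')
    (hangle : ∀ u v w : EuclideanSpace ℝ (Fin N), u = v + w →
      ((v ∈ E ∧ w ∈ E') ∨ (v ∈ F ∧ w ∈ F')) → max ‖v‖ ‖w‖ ≤ d * ‖u‖)
    (n : ℕ) (hn : 0 < n)
    (hA1 : ∀ u ∈ E, ‖A n u‖ ≤ C * lam ^ n * ‖u‖)
    (hA2 : ∀ v ∈ E', C⁻¹ * mu ^ n * ‖v‖ ≤ ‖A n v‖)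
    (hB1 : ∀ u ∈ F, ‖B n u‖ ≤ C * lam ^ n * ‖u‖)
    (hB2 : ∀ v ∈ F', C⁻¹ * mu ^ n * ‖v‖ ≤ ‖B n v‖) :
    ∀ a δ : ℝ, lam < a → 0 < δ → δ ≤ 1 →
      (lam / a) ^ (n + 1) < δ → δ ≤ (lam / a) ^ n →
      ‖A n - B n‖ ≤ δ * a ^ n →
      subDist E F ≤ (2 + d) * C ^ 2 * (mu / lam) *
        δ ^ (Real.log (mu / lam) / Real.log (a / lam)) := by
  unfold subDist
  exact auxMain A B lam mu C d hlam hlm hC hd E E' F F' hEE' hFF' hangle n hA1 hA2 hB1 hB2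
end

section
/- Let E and F be subspaces of a finite-dimensional real inner product space with E∩F={0}, and let ℓ≥1 be a real number. Suppose that |⟨v₀,w₀⟩| ≤ 1−1/ℓ for all unit vectors v₀∈E and w₀∈F. Then for every v∈E and w∈F one has ‖v‖ ≤ ℓ·‖v+w‖ and ‖w‖ ≤ ℓ·‖v+w‖. -/
section

open RealInnerProductSpace

variable {V : Type*} [NormedAddCommGroup V] [InnerProductSpace ℝ V]

theorem Submodule.abs_real_inner_le_mul_norm_mul_norm {E F : Submodule ℝ V} {c : ℝ}
    (h : ∀ v₀ ∈ E, ∀ w₀ ∈ F, ‖v₀‖ = 1 → ‖w₀‖ = 1 → |⟪v₀, w₀⟫| ≤ c)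
    {v w : V} (hv : v ∈ E) (hw : w ∈ F) : |⟪v, w⟫| ≤ c * ‖v‖ * ‖w‖ := by
  rcases eq_or_ne v 0 with rfl | hv0
  · simp
  rcases eq_or_ne w 0 with rfl | hw0
  · simp
  have hunit := h (‖v‖⁻¹ • v) (E.smul_mem _ hv) (‖w‖⁻¹ • w) (F.smul_mem _ hw)
    (norm_smul_inv_norm hv0) (norm_smul_inv_norm hw0)
  rw [real_inner_smul_left, real_inner_smul_right, abs_mul, abs_mul, abs_inv, abs_inv,
    abs_norm, abs_norm, ← mul_assoc, ← mul_inv, inv_mul_le_iff₀ (by positivity)] at hunit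
  linarith

theorem sub_mul_norm_le_norm_add_of_abs_real_inner_le {v w : V} {c : ℝ} (hc : 0 ≤ c)
    (h : |⟪v, w⟫| ≤ c * ‖v‖ * ‖w‖) : (1 - c) * ‖v‖ ≤ ‖v + w‖ := by
  rcases lt_or_ge 1 c with hc1 | hc1
  · nlinarith [norm_nonneg v, norm_nonneg (v + w)]
  refine abs_le_of_sq_le_sq' ?_ (norm_nonneg _) |>.2
  -- `‖v + w‖² - (1 - c)²‖v‖² ≥ (‖w‖ - c‖v‖)² + 2c(1 - c)‖v‖²`
  have hinner := (abs_le.1 h).1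
  rw [norm_add_sq_real]
  nlinarith [sq_nonneg (‖w‖ - c * ‖v‖), mul_nonneg (mul_nonneg hc (sub_nonneg.2 hc1))
    (sq_nonneg ‖v‖)]

end

theorem norm_bound_from_angle_bound_general
    {V : Type*} [NormedAddCommGroup V] [InnerProductSpace ℝ V]
    (E F : Submodule ℝ V)
    (ℓ : ℝ) (hℓ : 1 ≤ ℓ)
    (hangle : ∀ v₀ ∈ E, ∀ w₀ ∈ F, ‖v₀‖ = 1 → ‖w₀‖ = 1 →
      |(inner ℝ v₀ w₀ : ℝ)| ≤ 1 - 1 / ℓ) :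
    ∀ v ∈ E, ∀ w ∈ F, ‖v‖ ≤ ℓ * ‖v + w‖ ∧ ‖w‖ ≤ ℓ * ‖v + w‖ := by
  intro v hv w hw
  have hℓ₀ : 0 < ℓ := by linarith
  have hc : 0 ≤ 1 - 1 / ℓ := sub_nonneg.2 ((div_le_one hℓ₀).2 hℓ)
  have hvw := Submodule.abs_real_inner_le_mul_norm_mul_norm hangle hv hw
  have hwv : |(inner ℝ w v : ℝ)| ≤ (1 - 1 / ℓ) * ‖w‖ * ‖v‖ := by
    rwa [real_inner_comm, mul_right_comm]
  have hE := sub_mul_norm_le_norm_add_of_abs_real_inner_le hc hvw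
  have hF := sub_mul_norm_le_norm_add_of_abs_real_inner_le hc hwv
  rw [sub_sub_cancel, one_div, inv_mul_le_iff₀ hℓ₀] at hE hF
  exact ⟨hE, add_comm w v ▸ hF⟩

theorem norm_bound_from_angle_bound
    {V : Type*} [NormedAddCommGroup V] [InnerProductSpace ℝ V] [FiniteDimensional ℝ V]
    (E F : Submodule ℝ V) (hEF : E ⊓ F = ⊥)
    (ℓ : ℝ) (hℓ : 1 ≤ ℓ)
    (hangle : ∀ v₀ ∈ E, ∀ w₀ ∈ F, ‖v₀‖ = 1 → ‖w₀‖ = 1 →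
      |(inner ℝ v₀ w₀ : ℝ)| ≤ 1 - 1 / ℓ) :
    ∀ v ∈ E, ∀ w ∈ F, ‖v‖ ≤ ℓ * ‖v + w‖ ∧ ‖w‖ ≤ ℓ * ‖v + w‖ :=
  norm_bound_from_angle_bound_general E F ℓ hℓ hangle
end

section
/- Let E be a subspace of ℝ^d with the Euclidean inner product, let L:E→E^⊥ be a linear map into the orthogonal complement of E, and let F={u+Lu : u∈E} be the graph of L. Then ‖L‖/√(1+‖L‖²) ≤ dist(E,F) ≤ ‖L‖, where ‖L‖ is the operator norm of L. -/
/-!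
A unit vector `u ∈ E` lies at distance at most `‖L u‖ ≤ ‖L‖` from the point `u + L u` of `F`,
and a unit vector `u + L u` of `F` lies at distance exactly `‖L u‖ ≤ ‖L‖ ‖u‖ ≤ ‖L‖` from `E`,
since `L u ⊥ E`. For the lower bound, take a unit `u` with `‖L u‖ = ‖L‖` (compactness of the
sphere): by Pythagoras `‖u + L u‖ = √(1 + ‖L‖²)`, so the normalised vector of `F` in that
direction is at distance `‖L‖ / √(1 + ‖L‖²)` from `E`.
-/

theorem ContinuousLinearMap.exists_norm_eq_one_and_norm_apply_eq_opNorm {X Y : Type*}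
    [NormedAddCommGroup X] [NormedSpace ℝ X] [FiniteDimensional ℝ X] [Nontrivial X]
    [SeminormedAddCommGroup Y] [NormedSpace ℝ Y] (f : X →L[ℝ] Y) :
    ∃ x, ‖x‖ = 1 ∧ ‖f x‖ = ‖f‖ := by
  obtain ⟨x, hx, hmax⟩ := (isCompact_sphere (0 : X) 1).exists_isMaxOn
    (NormedSpace.sphere_nonempty.mpr zero_le_one) f.continuous.norm.continuousOn
  rw [mem_sphere_zero_iff_norm] at hx
  refine ⟨x, hx, le_antisymm (by simpa [hx] using f.le_opNorm x) ?_⟩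
  exact f.opNorm_le_of_unit_norm (norm_nonneg _) fun y hy ↦ hmax (mem_sphere_zero_iff_norm.2 hy)

section Orthogonal

variable {V : Type*} [NormedAddCommGroup V] [InnerProductSpace ℝ V]

theorem Submodule.norm_add_sq_of_mem_orthogonal {K : Submodule ℝ V} {a b : V} (ha : a ∈ K)
    (hb : b ∈ Kᗮ) : ‖a + b‖ ^ 2 = ‖a‖ ^ 2 + ‖b‖ ^ 2 := by
  simp only [sq]
  exact norm_add_sq_eq_norm_sq_add_norm_sq_real (K.inner_right_of_mem_orthogonal ha hb)

theorem Submodule.infDist_add_of_mem_orthogonal {K : Submodule ℝ V} {a b : V} (ha : a ∈ K)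
    (hb : b ∈ Kᗮ) : Metric.infDist (a + b) (K : Set V) = ‖b‖ := by
  refine le_antisymm ?_ ?_
  · simpa [dist_eq_norm] using Metric.infDist_le_dist_of_mem (x := a + b) ha
  · rw [Metric.infDist_eq_iInf]
    have : Nonempty (K : Set V) := ⟨⟨0, K.zero_mem⟩⟩
    refine le_ciInf fun w ↦ le_of_sq_le_sq ?_ dist_nonneg
    have hsplit : dist (a + b) w = ‖(a - w) + b‖ := by rw [dist_eq_norm, sub_add_eq_add_sub]
    rw [hsplit, K.norm_add_sq_of_mem_orthogonal (K.sub_mem ha w.2) hb]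
    exact le_add_of_nonneg_left (sq_nonneg _)

variable {E F : Submodule ℝ V} {L : E →L[ℝ] Eᗮ}
  (hF : ∀ v : V, v ∈ F ↔ ∃ u : E, v = (u : V) + (L u : V))
include hF

theorem infDist_graph_le_opNorm {v : V} (hv : v ∈ E) (hv₁ : ‖v‖ = 1) :
    Metric.infDist v (F : Set V) ≤ ‖L‖ := by
  have hvL : v + (L ⟨v, hv⟩ : V) ∈ F := (hF _).2 ⟨⟨v, hv⟩, rfl⟩
  calc Metric.infDist v (F : Set V) ≤ dist v (v + (L ⟨v, hv⟩ : V)) :=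
        Metric.infDist_le_dist_of_mem hvL
    _ = ‖L ⟨v, hv⟩‖ := by simp [dist_eq_norm]
    _ ≤ ‖L‖ * 1 := L.le_opNorm_of_le hv₁.le
    _ = ‖L‖ := mul_one _

theorem infDist_of_mem_graph_le_opNorm {v : V} (hv : v ∈ F) (hv₁ : ‖v‖ = 1) :
    Metric.infDist v (E : Set V) ≤ ‖L‖ := by
  obtain ⟨u, rfl⟩ := (hF v).1 hv
  have hu : ‖u‖ ≤ 1 := by
    have hpyth := E.norm_add_sq_of_mem_orthogonal u.2 (L u).2
    rw [hv₁] at hpyth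
    exact (sq_le_one_iff₀ (norm_nonneg _)).1
      (by rw [← E.coe_norm] at hpyth; linarith [sq_nonneg ‖(L u : V)‖])
  rw [E.infDist_add_of_mem_orthogonal u.2 (L u).2]
  exact (L.le_opNorm_of_le hu).trans_eq (mul_one _)

theorem exists_mem_graph_infDist_eq [FiniteDimensional ℝ E] [Nontrivial E] :
    ∃ v ∈ F, ‖v‖ = 1 ∧ Metric.infDist v (E : Set V) = ‖L‖ / √(1 + ‖L‖ ^ 2) := by
  obtain ⟨u, hu, hLu⟩ := L.exists_norm_eq_one_and_norm_apply_eq_opNorm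
  set w : V := (u : V) + (L u : V)
  have hw : ‖w‖ = √(1 + ‖L‖ ^ 2) := by
    rw [← Real.sqrt_sq (norm_nonneg w), E.norm_add_sq_of_mem_orthogonal u.2 (L u).2,
      show ‖(u : V)‖ = 1 from hu, show ‖(L u : V)‖ = ‖L‖ from hLu, one_pow]
  have hw₀ : ‖w‖ ≠ 0 := by rw [hw]; positivity
  refine ⟨‖w‖⁻¹ • w, F.smul_mem _ ((hF w).2 ⟨u, rfl⟩), ?_, ?_⟩
  · rw [norm_smul, norm_inv, norm_norm, inv_mul_cancel₀ hw₀]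
  · rw [smul_add, E.infDist_add_of_mem_orthogonal (E.smul_mem _ u.2) (Eᗮ.smul_mem _ (L u).2),
      norm_smul, norm_inv, norm_norm, show ‖(L u : V)‖ = ‖L‖ from hLu, hw, inv_mul_eq_div]

end Orthogonal

theorem dist_of_graph_of_linear_map {d : ℕ}
    (E : Submodule ℝ (EuclideanSpace ℝ (Fin d)))
    (L : E →L[ℝ] Eᗮ)
    (F : Submodule ℝ (EuclideanSpace ℝ (Fin d)))
    (hF : ∀ v : EuclideanSpace ℝ (Fin d), v ∈ F ↔
      ∃ u : E, v = (u : EuclideanSpace ℝ (Fin d)) + (L u : EuclideanSpace ℝ (Fin d))) :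
    ‖L‖ / Real.sqrt (1 + ‖L‖ ^ 2) ≤ subDist E F ∧ subDist E F ≤ ‖L‖ := by
  set S := {r : ℝ | ∃ v ∈ F, ‖v‖ = 1 ∧ r = Metric.infDist v (E : Set (EuclideanSpace ℝ (Fin d)))}
  have hS : ∀ r ∈ S, r ≤ ‖L‖ := by
    rintro _ ⟨v, hv, hv₁, rfl⟩
    exact infDist_of_mem_graph_le_opNorm hF hv hv₁
  refine ⟨le_trans ?_ (le_max_right _ _), max_le (Real.sSup_le ?_ L.opNorm_nonneg)
    (Real.sSup_le hS L.opNorm_nonneg)⟩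
  · rcases subsingleton_or_nontrivial E with hE | hE
    · rw [L.opNorm_subsingleton, zero_div]
      exact Real.sSup_nonneg fun _ ⟨_, _, _, hr⟩ ↦ hr ▸ Metric.infDist_nonneg
    · obtain ⟨v, hv, hv₁, hvE⟩ := exists_mem_graph_infDist_eq hF
      exact hvE ▸ le_csSup ⟨‖L‖, hS⟩ ⟨v, hv, hv₁, rfl⟩
  · rintro _ ⟨v, hv, hv₁, rfl⟩
    exact infDist_graph_le_opNorm hF hv hv₁
end

section
/- Fix an inner product h₀ on ℝ^d and decompositions ℝ^d = E⊕E^⊥ = F⊕F^⊥, where the orthogonal complements are taken with respect to h₀. Let (h_n^E)_{n≥0} and (h_n^F)_{n≥0} be sequences of inner products on ℝ^d, let C≥1, C₂>0, A>1, 0<λ<μ and δ∈(0,1] be constants, and assume that for all n≥0: (i) dist(h_n^E,h_n^F) ≤ log(1+δ·C₂·A^n); (ii) ‖f‖_{h_n^F} ≤ Cλ^n‖f‖_{h₀} for all f∈F and ‖f′‖_{h_n^F} ≥ C^{-1}μ^n‖f′‖_{h₀} for all f′∈F^⊥; (iii) ‖e‖_{h_n^E} ≤ Cλ^n‖e‖_{h₀}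 for all e∈E and ‖e′‖_{h_n^E} ≥ C^{-1}μ^n‖e′‖_{h₀} for all e′∈E^⊥. Then dist_{h₀}(E,F) ≤ C²(2+C₂A)·δ^{log(μ/λ)/log A}. -/
/-- The norm associated to a (positive definite symmetric) bilinear form. -/
noncomputable def bilinNorm {d : ℕ}
    (h : EuclideanSpace ℝ (Fin d) →ₗ[ℝ] EuclideanSpace ℝ (Fin d) →ₗ[ℝ] ℝ)
    (v : EuclideanSpace ℝ (Fin d)) : ℝ :=
  Real.sqrt (h v v)

/-- Distance between two metrics (inner products):
`dist(h₁,h₂) = log sup{‖v₁‖_{h₂}, ‖v₂‖_{h₁} : ‖v₁‖_{h₁}=1, ‖v₂‖_{h₂}=1}`. -/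
noncomputable def metricsDist {d : ℕ}
    (h₁ h₂ : EuclideanSpace ℝ (Fin d) →ₗ[ℝ] EuclideanSpace ℝ (Fin d) →ₗ[ℝ] ℝ) : ℝ :=
  Real.log (sSup {r : ℝ | (∃ v, bilinNorm h₁ v = 1 ∧ r = bilinNorm h₂ v) ∨
    (∃ v, bilinNorm h₂ v = 1 ∧ r = bilinNorm h₁ v)})

/-- The distance `dist_{h₀}(E,F)` between two subspaces, where `h₀` is the standard
Euclidean inner product (used for the norms and the orthogonal complements). -/
noncomputable def subDistPerp {d : ℕ} (E F : Submodule ℝ (EuclideanSpace ℝ (Fin d))) : ℝ :=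
  sSup ({r : ℝ | ∃ e ∈ E, ∃ f ∈ F, ∃ f' ∈ Fᗮ,
          e = f + f' ∧ ‖e‖ = 1 ∧ r = ‖f'‖} ∪
        {r : ℝ | ∃ f ∈ F, ∃ e ∈ E, ∃ e' ∈ Eᗮ,
          f = e + e' ∧ ‖f‖ = 1 ∧ r = ‖e'‖})

/-!
Write a unit vector `e ∈ E` as `f + f'` with `f ∈ F` and `f' ∈ Fᗮ`. At time `n` the metric
`h_n^F` stretches `f'` by at least `C⁻¹ μⁿ`, whereas `f' = e - f` has `h_n^F`-norm at most
`(1 + δ C₂ Aⁿ) C λⁿ + C λⁿ`, because `h_n^F` is close to `h_n^E`, which contracts `E`, and `h_n^F`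
contracts `F`. Hence `‖f'‖ ≤ C² (λ/μ)ⁿ (2 + δ C₂ Aⁿ)` for every `n`, and choosing `n` with
`A^(n-1) ≤ δ⁻¹ < Aⁿ` makes this at most `C² (2 + C₂ A) δ^(log(μ/λ)/log A)`. Exchanging the roles of
`E` and `F` bounds the other half of `dist_{h₀}(E, F)`.
-/

open Real

section Homogeneous

variable {V : Type*} [NormedAddCommGroup V] [NormedSpace ℝ V] [ProperSpace V]

theorem exists_pos_mul_norm_le_of_homogeneous {g : V → ℝ} (hg : Continuous g)
    (hsmul : ∀ (a : ℝ) v, g (a • v) = |a| * g v) (hpos : ∀ v, v ≠ 0 → 0 < g v) :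
    ∃ c > 0, ∀ v, c * ‖v‖ ≤ g v := by
  have hg0 : g 0 = 0 := by simpa using hsmul 0 0
  rcases subsingleton_or_nontrivial V with hV | hV
  · exact ⟨1, one_pos, fun v => by simp [Subsingleton.elim v 0, hg0]⟩
  obtain ⟨u, hu, hmin⟩ := (isCompact_sphere (0 : V) 1).exists_isMinOn
    (NormedSpace.sphere_nonempty.mpr zero_le_one) hg.continuousOn
  have hu0 : u ≠ 0 := ne_zero_of_mem_unit_sphere ⟨u, hu⟩
  refine ⟨g u, hpos u hu0, fun v => ?_⟩
  rcases eq_or_ne v 0 with rfl | hv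
  · simp [hg0]
  have hnv : 0 < ‖v‖ := norm_pos_iff.mpr hv
  have hsphere : ‖v‖⁻¹ • v ∈ Metric.sphere (0 : V) 1 := by
    simp [norm_smul, hnv.ne']
  calc g u * ‖v‖ ≤ g (‖v‖⁻¹ • v) * ‖v‖ := by gcongr; exact hmin hsphere
    _ = g v := by rw [hsmul, abs_of_pos (inv_pos.mpr hnv)]; field_simp

end Homogeneous

local notation "ℝ^" n => EuclideanSpace ℝ (Fin n)

section BilinNorm

variable {d : ℕ} (h : LinearMap.BilinForm ℝ (ℝ^d))

theorem bilinNorm_smul (a : ℝ) (v : ℝ^d) : bilinNorm h (a • v) = |a| * bilinNorm h v := by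
  rw [bilinNorm, bilinNorm, ← sqrt_sq_eq_abs, ← sqrt_mul (sq_nonneg a)]
  congr 1
  simp only [map_smul, LinearMap.smul_apply, smul_eq_mul]
  ring

theorem continuous_bilinNorm : Continuous (bilinNorm h) := by
  let g : (ℝ^d) →L[ℝ] (ℝ^d) →L[ℝ] ℝ :=
    LinearMap.toContinuousLinearMap (LinearMap.toContinuousLinearMap.toLinearMap.comp h)
  exact continuous_sqrt.comp (g.continuous.clm_apply continuous_id : Continuous fun v => g v v)

/-- Cauchy–Schwarz for the symmetrization of `h`, from the discriminant of the nonnegative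
quadratic `t ↦ h (v + t • w) (v + t • w)`. -/
theorem bilinNorm_add_le (hpos : ∀ v, 0 ≤ h v v) (v w : ℝ^d) :
    bilinNorm h (v + w) ≤ bilinNorm h v + bilinNorm h w := by
  have hquad : ∀ t : ℝ, 0 ≤ h w w * (t * t) + (h v w + h w v) * t + h v v := fun t => by
    convert hpos (v + t • w) using 1
    simp only [map_add, map_smul, LinearMap.add_apply, LinearMap.smul_apply, smul_eq_mul]
    ring
  have hdisc := discrim_le_zero hquad
  rw [discrim] at hdisc
  have hv := sq_sqrt (hpos v)
  have hw := sq_sqrt (hpos w)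
  have hcs : (h v w + h w v) / 2 ≤ bilinNorm h v * bilinNorm h w := by
    apply abs_le_of_sq_le_sq' _ (by unfold bilinNorm; positivity) |>.2
    unfold bilinNorm
    nlinarith
  unfold bilinNorm at *
  rw [sqrt_le_left (by positivity)]
  simp only [map_add, LinearMap.add_apply]
  nlinarith

theorem bilinNorm_sub_le (hpos : ∀ v, 0 ≤ h v v) (v w : ℝ^d) :
    bilinNorm h (v - w) ≤ bilinNorm h v + bilinNorm h w := by
  have hneg : bilinNorm h (-w) = bilinNorm h w := by simpa using bilinNorm_smul h (-1) w
  simpa [sub_eq_add_neg, hneg] using bilinNorm_add_le h hpos v (-w)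

end BilinNorm

section MetricsDist

variable {d : ℕ}

theorem exists_pos_mul_norm_le_bilinNorm {h : LinearMap.BilinForm ℝ (ℝ^d)}
    (hpos : ∀ v, v ≠ 0 → 0 < h v v) : ∃ c > 0, ∀ v, c * ‖v‖ ≤ bilinNorm h v :=
  exists_pos_mul_norm_le_of_homogeneous (continuous_bilinNorm h) (bilinNorm_smul h)
    fun v hv => sqrt_pos.2 (hpos v hv)

theorem isCompact_setOf_bilinNorm_eq_one {h : LinearMap.BilinForm ℝ (ℝ^d)}
    (hpos : ∀ v, v ≠ 0 → 0 < h v v) : IsCompact {v | bilinNorm h v = 1} := by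
  obtain ⟨c, hc, hle⟩ := exists_pos_mul_norm_le_bilinNorm hpos
  refine Metric.isCompact_of_isClosed_isBounded
    (isClosed_eq (continuous_bilinNorm h) continuous_const) ?_
  refine (Metric.isBounded_closedBall (x := 0) (r := c⁻¹)).subset fun v hv => ?_
  rw [mem_closedBall_zero_iff, ← mul_one c⁻¹, le_inv_mul_iff₀ hc]
  exact (hle v).trans_eq hv

theorem metricsDist_comm (h₁ h₂ : LinearMap.BilinForm ℝ (ℝ^d)) :
    metricsDist h₁ h₂ = metricsDist h₂ h₁ := by
  simp only [metricsDist, or_comm]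

theorem bilinNorm_le_of_metricsDist_le {h₁ h₂ : LinearMap.BilinForm ℝ (ℝ^d)}
    (hpos₁ : ∀ v, v ≠ 0 → 0 < h₁ v v) (hpos₂ : ∀ v, v ≠ 0 → 0 < h₂ v v) {X : ℝ} (hX : 0 < X)
    (hdist : metricsDist h₁ h₂ ≤ log X) (v : ℝ^d) : bilinNorm h₂ v ≤ X * bilinNorm h₁ v := by
  set S := {r : ℝ | (∃ v, bilinNorm h₁ v = 1 ∧ r = bilinNorm h₂ v) ∨
    (∃ v, bilinNorm h₂ v = 1 ∧ r = bilinNorm h₁ v)}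
  have hS : S = bilinNorm h₂ '' {v | bilinNorm h₁ v = 1} ∪
      bilinNorm h₁ '' {v | bilinNorm h₂ v = 1} := by
    ext r
    simp only [S, Set.mem_ofPred_eq, Set.mem_union, Set.mem_image, eq_comm (a := r)]
  have hbdd : BddAbove S := hS ▸
    ((isCompact_setOf_bilinNorm_eq_one hpos₁).image (continuous_bilinNorm h₂)).bddAbove.union
      ((isCompact_setOf_bilinNorm_eq_one hpos₂).image (continuous_bilinNorm h₁)).bddAbove
  have hsup : sSup S ≤ X := by
    rcases le_or_gt (sSup S) 0 with h0 | h0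
    · linarith
    · exact (log_le_log_iff h0 hX).1 hdist
  rcases eq_or_ne v 0 with rfl | hv
  · simp [bilinNorm]
  have ha : 0 < bilinNorm h₁ v := sqrt_pos.2 (hpos₁ v hv)
  have hunit : bilinNorm h₁ ((bilinNorm h₁ v)⁻¹ • v) = 1 := by
    rw [bilinNorm_smul, abs_of_pos (inv_pos.2 ha), inv_mul_cancel₀ ha.ne']
  have hle := (le_csSup hbdd (Or.inl ⟨_, hunit, rfl⟩)).trans hsup
  rw [bilinNorm_smul, abs_of_pos (inv_pos.2 ha), inv_mul_le_iff₀ ha] at hle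
  linarith

end MetricsDist

theorem norm_orthogonal_component_le {d : ℕ} {h : LinearMap.BilinForm ℝ (ℝ^d)}
    (hpos : ∀ v, 0 ≤ h v v) {F : Submodule ℝ (ℝ^d)} {f f' : ℝ^d} (hf : f ∈ F) (hf' : f' ∈ Fᗮ)
    {C a b X : ℝ} (hC : 0 < C) (ha : 0 ≤ a) (hb : 0 < b)
    (hsum : bilinNorm h (f + f') ≤ X * (C * a * ‖f + f'‖))
    (hle : bilinNorm h f ≤ C * a * ‖f‖) (hge : C⁻¹ * b * ‖f'‖ ≤ bilinNorm h f') :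
    ‖f'‖ ≤ C ^ 2 * (a / b) * (X + 1) * ‖f + f'‖ := by
  have hpyth : ‖f‖ ≤ ‖f + f'‖ := by
    have := norm_add_sq_eq_norm_sq_add_norm_sq_real
      (Submodule.inner_right_of_mem_orthogonal hf hf')
    nlinarith [norm_nonneg f, norm_nonneg f', norm_nonneg (f + f')]
  have htri : bilinNorm h f' ≤ bilinNorm h (f + f') + bilinNorm h f := by
    simpa using bilinNorm_sub_le h hpos (f + f') f
  have hmain : C⁻¹ * b * ‖f'‖ ≤ C * a * (X + 1) * ‖f + f'‖ := by
    have : C * a * ‖f‖ ≤ C * a * ‖f + f'‖ := by gcongr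
    linarith
  rw [show C ^ 2 * (a / b) * (X + 1) * ‖f + f'‖ = C * a * (X + 1) * ‖f + f'‖ / (C⁻¹ * b) by
    field_simp, le_div_iff₀ (by positivity)]
  linarith

theorem inv_pow_le_rpow_logb {A r δ : ℝ} (hA : 1 < A) (hr : 1 ≤ r) (hδ : 0 < δ) {m : ℕ}
    (hm : δ⁻¹ ≤ A ^ m) : (r ^ m)⁻¹ ≤ δ ^ logb A r := by
  have hA0 : 0 < A := by linarith
  have hrm : r ^ m = (A ^ m) ^ logb A r := by
    rw [← rpow_natCast, ← rpow_natCast, ← rpow_mul hA0.le, mul_comm, rpow_mul hA0.le,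
      rpow_logb hA0 hA.ne' (by linarith)]
  rw [inv_le_comm₀ (by positivity) (by positivity), ← inv_rpow hδ.le, hrm]
  exact rpow_le_rpow (by positivity) hm (logb_nonneg hA hr)

theorem le_mul_rpow_logb_of_forall_le {x K C₂ A r δ : ℝ} (hK : 0 ≤ K) (hC₂ : 0 ≤ C₂)
    (hA : 1 < A) (hr : 1 ≤ r) (hδ0 : 0 < δ) (hδ1 : δ ≤ 1)
    (hx : ∀ n : ℕ, x ≤ K * (r ^ n)⁻¹ * (2 + δ * C₂ * A ^ n)) :
    x ≤ K * (2 + C₂ * A) * δ ^ logb A r := by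
  obtain ⟨n, hlow, hhigh⟩ := exists_nat_pow_near ((one_le_inv₀ hδ0).2 hδ1) hA
  have hδA : δ * A ^ (n + 1) ≤ A := by
    have : δ * A ^ n ≤ 1 := by rwa [← le_inv_mul_iff₀ hδ0, mul_one]
    rw [pow_succ, ← mul_assoc]
    nlinarith
  calc x ≤ K * (r ^ (n + 1))⁻¹ * (2 + δ * C₂ * A ^ (n + 1)) := hx (n + 1)
    _ ≤ K * δ ^ logb A r * (2 + C₂ * A) := by
      gcongr K * ?_ * ?_
      · exact inv_pow_le_rpow_logb hA hr hδ0 hhigh.le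
      · nlinarith
    _ = K * (2 + C₂ * A) * δ ^ logb A r := by ring

theorem norm_orthogonal_component_le_rpow {d : ℕ} {E F : Submodule ℝ (ℝ^d)}
    {hE hF : ℕ → LinearMap.BilinForm ℝ (ℝ^d)}
    (hEpos : ∀ n v, v ≠ 0 → 0 < hE n v v) (hFpos : ∀ n v, v ≠ 0 → 0 < hF n v v)
    {C C₂ A lam mu δ : ℝ} (hC : 0 < C) (hC₂ : 0 < C₂) (hA : 1 < A) (hlam : 0 < lam)
    (hlm : lam < mu) (hδ0 : 0 < δ) (hδ1 : δ ≤ 1)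
    (hdist : ∀ n : ℕ, metricsDist (hE n) (hF n) ≤ log (1 + δ * C₂ * A ^ n))
    (hE1 : ∀ n : ℕ, ∀ e ∈ E, bilinNorm (hE n) e ≤ C * lam ^ n * ‖e‖)
    (hF1 : ∀ n : ℕ, ∀ f ∈ F, bilinNorm (hF n) f ≤ C * lam ^ n * ‖f‖)
    (hF2 : ∀ n : ℕ, ∀ f' ∈ Fᗮ, C⁻¹ * mu ^ n * ‖f'‖ ≤ bilinNorm (hF n) f')
    {e f f' : ℝ^d} (he : e ∈ E) (hf : f ∈ F) (hf' : f' ∈ Fᗮ) (heq : e = f + f')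
    (hnorm : ‖e‖ = 1) :
    ‖f'‖ ≤ C ^ 2 * (2 + C₂ * A) * δ ^ logb A (mu / lam) := by
  subst heq
  refine le_mul_rpow_logb_of_forall_le (by positivity) hC₂.le hA ((one_le_div hlam).2 hlm.le)
    hδ0 hδ1 fun n => ?_
  have hFnonneg : ∀ v, 0 ≤ hF n v v := fun v => by
    rcases eq_or_ne v 0 with rfl | hv
    · simp
    · exact (hFpos n v hv).le
  have hsum : bilinNorm (hF n) (f + f') ≤ (1 + δ * C₂ * A ^ n) * (C * lam ^ n * ‖f + f'‖) :=
    (bilinNorm_le_of_metricsDist_le (hEpos n) (hFpos n) (by positivity) (hdist n) _).trans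
      (by gcongr; exact hE1 n _ he)
  calc ‖f'‖ ≤ C ^ 2 * (lam ^ n / mu ^ n) * (1 + δ * C₂ * A ^ n + 1) * ‖f + f'‖ :=
        norm_orthogonal_component_le hFnonneg hf hf' hC (by positivity)
          (by positivity [hlam.trans hlm]) hsum (hF1 n f hf) (hF2 n f' hf')
    _ = C ^ 2 * ((mu / lam) ^ n)⁻¹ * (2 + δ * C₂ * A ^ n) := by
      rw [hnorm, div_pow, inv_div]
      ring

theorem metrics_dist_bound_general {d : ℕ}
    (E F : Submodule ℝ (EuclideanSpace ℝ (Fin d)))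
    (hE hF : ℕ → (EuclideanSpace ℝ (Fin d) →ₗ[ℝ] EuclideanSpace ℝ (Fin d) →ₗ[ℝ] ℝ))
    -- the `h_n^E` and `h_n^F` are inner products (symmetric positive definite)
    (hEpos : ∀ n v, v ≠ 0 → 0 < hE n v v)
    (hFpos : ∀ n v, v ≠ 0 → 0 < hF n v v)
    (C C₂ A lam mu δ : ℝ)
    (hC : 1 ≤ C) (hC₂ : 0 < C₂) (hA : 1 < A) (hlam : 0 < lam) (hlm : lam < mu)
    (hδ0 : 0 < δ) (hδ1 : δ ≤ 1)
    -- (i) distance between the metrics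
    (hdist : ∀ n : ℕ, metricsDist (hE n) (hF n) ≤ Real.log (1 + δ * C₂ * A ^ n))
    -- (ii) growth estimates for F
    (hF1 : ∀ n : ℕ, ∀ f ∈ F, bilinNorm (hF n) f ≤ C * lam ^ n * ‖f‖)
    (hF2 : ∀ n : ℕ, ∀ f' ∈ Fᗮ, C⁻¹ * mu ^ n * ‖f'‖ ≤ bilinNorm (hF n) f')
    -- (iii) growth estimates for E
    (hE1 : ∀ n : ℕ, ∀ e ∈ E, bilinNorm (hE n) e ≤ C * lam ^ n * ‖e‖)
    (hE2 : ∀ n : ℕ, ∀ e' ∈ Eᗮ, C⁻¹ * mu ^ n * ‖e'‖ ≤ bilinNorm (hE n) e') :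
    subDistPerp E F ≤ C ^ 2 * (2 + C₂ * A) * δ ^ (Real.log (mu / lam) / Real.log A) := by
  have hC0 : 0 < C := zero_lt_one.trans_le hC
  rw [log_div_log]
  refine Real.sSup_le ?_ (by positivity)
  rintro r (⟨e, he, f, hf, f', hf', heq, hnorm, rfl⟩ | ⟨f, hf, e, he, e', he', heq, hnorm, rfl⟩)
  · exact norm_orthogonal_component_le_rpow hEpos hFpos hC0 hC₂ hA hlam hlm hδ0 hδ1 hdist
      hE1 hF1 hF2 he hf hf' heq hnorm
  · exact norm_orthogonal_component_le_rpow hFpos hEpos hC0 hC₂ hA hlam hlm hδ0 hδ1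
      (fun n => metricsDist_comm (hE n) (hF n) ▸ hdist n) hF1 hE1 hE2 hf he he' heq hnorm

theorem metrics_dist_bound {d : ℕ}
    (E F : Submodule ℝ (EuclideanSpace ℝ (Fin d)))
    (hE hF : ℕ → (EuclideanSpace ℝ (Fin d) →ₗ[ℝ] EuclideanSpace ℝ (Fin d) →ₗ[ℝ] ℝ))
    -- the `h_n^E` and `h_n^F` are inner products (symmetric positive definite)
    (hEsymm : ∀ n v w, hE n v w = hE n w v)
    (hEpos : ∀ n v, v ≠ 0 → 0 < hE n v v)
    (hFsymm : ∀ n v w, hF n v w = hF n w v)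
    (hFpos : ∀ n v, v ≠ 0 → 0 < hF n v v)
    (C C₂ A lam mu δ : ℝ)
    (hC : 1 ≤ C) (hC₂ : 0 < C₂) (hA : 1 < A) (hlam : 0 < lam) (hlm : lam < mu)
    (hδ0 : 0 < δ) (hδ1 : δ ≤ 1)
    -- (i) distance between the metrics
    (hdist : ∀ n : ℕ, metricsDist (hE n) (hF n) ≤ Real.log (1 + δ * C₂ * A ^ n))
    -- (ii) growth estimates for F
    (hF1 : ∀ n : ℕ, ∀ f ∈ F, bilinNorm (hF n) f ≤ C * lam ^ n * ‖f‖)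
    (hF2 : ∀ n : ℕ, ∀ f' ∈ Fᗮ, C⁻¹ * mu ^ n * ‖f'‖ ≤ bilinNorm (hF n) f')
    -- (iii) growth estimates for E
    (hE1 : ∀ n : ℕ, ∀ e ∈ E, bilinNorm (hE n) e ≤ C * lam ^ n * ‖e‖)
    (hE2 : ∀ n : ℕ, ∀ e' ∈ Eᗮ, C⁻¹ * mu ^ n * ‖e'‖ ≤ bilinNorm (hE n) e') :
    subDistPerp E F ≤ C ^ 2 * (2 + C₂ * A) * δ ^ (Real.log (mu / lam) / Real.log A) :=
  metrics_dist_bound_general E F hE hF hEpos hFpos C C₂ A lam mu δ hC hC₂ hA hlam hlm hδ0 hδ1 hdist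
    hF1 hF2 hE1 hE2
end

section
/- Let (K,ρ) be a compact metric space, let m≥1 and k₊,k₋ with k₊+k₋≥m, and let F₊,F₋ be maps from K to the set of linear subspaces of ℝ^m with dim F₊(x)=k₊ and dim F₋(x)=k₋ for all x∈K. Assume F₊ is Hölder continuous with exponent ν₊ and F₋ is Hölder continuous with exponent ν₋, with respect to the distance dist between subspaces, and that for every x∈K the subspaces are in general position: F₊(x)+F₋(x)=ℝ^m (so that dim(F₊(x)∩F₋(x))=k₊+k₋−m). Then the map I:K→{subspaces of ℝ^m} defined by I(x)=F₊(x)∩F₋(x) is Hölder continuous with exponent min(ν₊,ν₋); that is, there exists H>0 such that dist(I(x),I(y)) ≤ H·ρ(x,y)^{min(ν₊,ν₋)} for all x,y∈K. -/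
/-!
Project a unit vector `v ∈ F₊(x) ∩ F₋(x)` orthogonally to `p ∈ F₊(y)` and `q ∈ F₋(y)`; both
lie within `dist(F±(x), F±(y))` of `v`. If `p - q = a + b` with `a ∈ F₊(y)`, `b ∈ F₋(y)` and
`‖a‖ ≤ C ‖p - q‖`, then `p - a = q + b ∈ F₊(y) ∩ F₋(y)` is within `(1 + C)` times the sum of the two
distances from `v`. Such a `C` exists uniformly in `y`: by general position `P₊(y) + P₋(y)` (the sum
of the orthogonal projections) is invertible, it depends continuously on `y`, and `K` is compact,
so the norm of its inverse is bounded; `u = (P₊ + P₋)⁻¹ z` gives the splitting `z = P₊ u + P₋ u`.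
-/

open Metric Filter Topology

section Splitting

variable {V : Type*} [NormedAddCommGroup V] [InnerProductSpace ℝ V]

def SplitsWithBound (C : ℝ) (U W : Submodule ℝ V) : Prop :=
  ∀ z : V, ∃ a ∈ U, ∃ b ∈ W, a + b = z ∧ ‖a‖ ≤ C * ‖z‖

theorem Submodule.real_inner_starProjection_self (U : Submodule ℝ V) [U.HasOrthogonalProjection]
    (v : V) : inner ℝ (U.starProjection v) v = ‖U.starProjection v‖ ^ 2 := by
  rw [← U.starProjection_eq_self_iff.mpr (U.starProjection_apply_mem v),
    U.inner_starProjection_left_eq_right, U.starProjection_eq_self_iff.mpr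
      (U.starProjection_apply_mem v), real_inner_self_eq_norm_sq]

variable [FiniteDimensional ℝ V]

theorem isUnit_starProjection_add_starProjection {U W : Submodule ℝ V} (hUW : U ⊔ W = ⊤) :
    IsUnit (U.starProjection + W.starProjection) := by
  rw [ContinuousLinearMap.isUnit_iff_isUnit_toLinearMap, LinearMap.isUnit_iff_ker_eq_bot,
    LinearMap.ker_eq_bot']
  intro u hu
  have hsq : ‖U.starProjection u‖ ^ 2 + ‖W.starProjection u‖ ^ 2 = 0 := by
    have := congrArg (fun x => inner ℝ x u) hu
    simpa [inner_add_left, Submodule.real_inner_starProjection_self] using this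
  obtain ⟨hU, hW⟩ := (add_eq_zero_iff_of_nonneg (sq_nonneg _) (sq_nonneg _)).mp hsq
  have hmem : u ∈ Uᗮ ⊓ Wᗮ := ⟨U.starProjection_apply_eq_zero_iff.mp (by simpa using hU),
    W.starProjection_apply_eq_zero_iff.mp (by simpa using hW)⟩
  rwa [Submodule.inf_orthogonal, hUW, Submodule.top_orthogonal_eq_bot] at hmem

theorem splitsWithBound_of_norm_inverse_le {U W : Submodule ℝ V} (hUW : U ⊔ W = ⊤) {C : ℝ}
    (hC : ‖Ring.inverse (U.starProjection + W.starProjection)‖ ≤ C) : SplitsWithBound C U W := by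
  intro z
  set u := Ring.inverse (U.starProjection + W.starProjection) z
  have hu : U.starProjection u + W.starProjection u = z := by
    simpa using congrArg (· z)
      (Ring.mul_inverse_cancel _ (isUnit_starProjection_add_starProjection hUW))
  refine ⟨_, U.starProjection_apply_mem u, _, W.starProjection_apply_mem u, hu, ?_⟩
  calc ‖U.starProjection u‖ ≤ ‖u‖ := U.norm_starProjection_apply_le u
    _ ≤ ‖Ring.inverse (U.starProjection + W.starProjection)‖ * ‖z‖ :=
        ContinuousLinearMap.le_opNorm _ _
    _ ≤ C * ‖z‖ := by gcongr

theorem exists_splitsWithBound_of_continuous {K : Type*} [TopologicalSpace K] [CompactSpace K]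
    {U W : K → Submodule ℝ V} (hU : Continuous fun x => (U x).starProjection)
    (hW : Continuous fun x => (W x).starProjection) (hUW : ∀ x, U x ⊔ W x = ⊤) :
    ∃ C, 0 ≤ C ∧ ∀ x, SplitsWithBound C (U x) (W x) := by
  have hinv : Continuous fun x => Ring.inverse ((U x).starProjection + (W x).starProjection) := by
    refine continuous_iff_continuousAt.mpr fun x => ?_
    have hx := isUnit_starProjection_add_starProjection (hUW x)
    have hinvx : ContinuousAt Ring.inverse ((U x).starProjection + (W x).starProjection) :=
      hx.unit_spec ▸ NormedRing.inverse_continuousAt hx.unit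
    exact hinvx.comp (f := fun x => (U x).starProjection + (W x).starProjection)
      (hU.add hW).continuousAt
  obtain ⟨C, hC⟩ := isCompact_univ.exists_bound_of_continuousOn hinv.continuousOn
  exact ⟨max C 0, le_max_right _ _, fun x =>
    splitsWithBound_of_norm_inverse_le (hUW x) ((hC x trivial).trans (le_max_left _ _))⟩

end Splitting

section SubDist

variable {n : ℕ}

local notation "𝕍" => EuclideanSpace ℝ (Fin n)

theorem subDist_comm (E F : Submodule ℝ 𝕍) : subDist E F = subDist F E := max_comm _ _

theorem subDist_nonneg (E F : Submodule ℝ 𝕍) : 0 ≤ subDist E F :=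
  (Real.sSup_nonneg (by rintro _ ⟨_, _, _, rfl⟩; exact infDist_nonneg)).trans (le_max_left _ _)

theorem infDist_le_subDist {E F : Submodule ℝ 𝕍} {v : 𝕍} (hv : v ∈ E) (hv1 : ‖v‖ = 1) :
    infDist v (F : Set 𝕍) ≤ subDist E F := by
  have hbdd : BddAbove {r : ℝ | ∃ v ∈ E, ‖v‖ = 1 ∧ r = infDist v (F : Set 𝕍)} := by
    refine ⟨1, fun r ⟨u, _, hu1, hr⟩ => ?_⟩
    calc r ≤ dist u 0 := hr ▸ infDist_le_dist_of_mem F.zero_mem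
      _ = 1 := by rw [dist_zero_right, hu1]
  exact (le_csSup hbdd ⟨v, hv, hv1, rfl⟩).trans (le_max_left _ _)

theorem subDist_le {E F : Submodule ℝ 𝕍} {c : ℝ} (hc : 0 ≤ c)
    (hEF : ∀ v ∈ E, ‖v‖ = 1 → infDist v (F : Set 𝕍) ≤ c)
    (hFE : ∀ v ∈ F, ‖v‖ = 1 → infDist v (E : Set 𝕍) ≤ c) : subDist E F ≤ c :=
  max_le (Real.sSup_le (by rintro _ ⟨v, hv, hv1, rfl⟩; exact hEF v hv hv1) hc)
    (Real.sSup_le (by rintro _ ⟨v, hv, hv1, rfl⟩; exact hFE v hv hv1) hc)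

theorem norm_sub_starProjection_eq_infDist (F : Submodule ℝ 𝕍) (v : 𝕍) :
    ‖v - F.starProjection v‖ = infDist v (F : Set 𝕍) := by
  rw [F.starProjection_minimal, infDist_eq_iInf]
  simp only [dist_eq_norm]
  rfl

theorem norm_sub_starProjection_le_subDist_mul {E F : Submodule ℝ 𝕍} {v : 𝕍} (hv : v ∈ E) :
    ‖v - F.starProjection v‖ ≤ subDist E F * ‖v‖ := by
  rcases eq_or_ne v 0 with rfl | hv0
  · simp
  have hvn : 0 < ‖v‖ := norm_pos_iff.mpr hv0
  have hunit : ‖‖v‖⁻¹ • v‖ = 1 := by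
    rw [norm_smul, norm_inv, norm_norm, inv_mul_cancel₀ hvn.ne']
  have h := infDist_le_subDist (F := F) (E.smul_mem ‖v‖⁻¹ hv) hunit
  rw [← norm_sub_starProjection_eq_infDist, map_smul, ← smul_sub, norm_smul, norm_inv,
    norm_norm, inv_mul_le_iff₀ hvn] at h
  linarith

theorem norm_starProjection_le_subDist_mul_of_mem_orthogonal {E F : Submodule ℝ 𝕍} {v : 𝕍}
    (hv : v ∈ Eᗮ) : ‖F.starProjection v‖ ≤ subDist E F * ‖v‖ := by
  set w := F.starProjection v
  -- `⟪w, v⟫ = ⟪w - P_E w, v⟫` because `v ⊥ E`, and `w - P_E w` is small since `w ∈ F`.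
  have hinner : ‖w‖ ^ 2 = inner ℝ (w - E.starProjection w) v := by
    rw [inner_sub_left, real_inner_comm v (E.starProjection w), (E.mem_orthogonal' v).mp hv _
      (E.starProjection_apply_mem w), sub_zero, F.real_inner_starProjection_self]
  have hclose : ‖w - E.starProjection w‖ ≤ subDist E F * ‖w‖ :=
    subDist_comm E F ▸ norm_sub_starProjection_le_subDist_mul (F.starProjection_apply_mem v)
  have hsq : ‖w‖ ^ 2 ≤ subDist E F * ‖w‖ * ‖v‖ :=
    hinner ▸ (real_inner_le_norm _ _).trans (by gcongr)
  rcases (norm_nonneg w).eq_or_lt with hw | hw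
  · rw [← hw]; exact mul_nonneg (subDist_nonneg E F) (norm_nonneg v)
  · nlinarith

theorem norm_starProjection_sub_starProjection_le (E F : Submodule ℝ 𝕍) :
    ‖E.starProjection - F.starProjection‖ ≤ 2 * subDist E F := by
  refine ContinuousLinearMap.opNorm_le_bound _ (by linarith [subDist_nonneg E F]) fun v => ?_
  have hdecomp : E.starProjection v - F.starProjection v =
      (E.starProjection v - F.starProjection (E.starProjection v)) +
        F.starProjection (E.starProjection v - v) := by
    rw [map_sub]; abel
  have horth : E.starProjection v - v ∈ Eᗮ := by
    rw [← neg_sub]; exact Eᗮ.neg_mem (E.sub_starProjection_mem_orthogonal v)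
  have hnorm : ‖E.starProjection v - v‖ ≤ ‖v‖ := by
    rw [norm_sub_rev, norm_sub_starProjection_eq_infDist]
    simpa using infDist_le_dist_of_mem (x := v) E.zero_mem
  have h₁ := norm_sub_starProjection_le_subDist_mul (F := F) (E.starProjection_apply_mem v)
  have h₂ := norm_starProjection_le_subDist_mul_of_mem_orthogonal (F := F) horth
  have hd := subDist_nonneg E F
  rw [sub_apply, hdecomp]
  calc _ ≤ _ := norm_add_le _ _
    _ ≤ subDist E F * ‖v‖ + subDist E F * ‖v‖ := by
        gcongr
        · exact h₁.trans (by gcongr; exact E.norm_starProjection_apply_le v)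
        · exact h₂.trans (by gcongr)
    _ = 2 * subDist E F * ‖v‖ := by ring

theorem continuous_starProjection_of_subDist_le_rpow {K : Type*} [PseudoMetricSpace K]
    {G : K → Submodule ℝ 𝕍} {H ν : ℝ} (hν : 0 < ν)
    (hG : ∀ x y, subDist (G x) (G y) ≤ H * dist x y ^ ν) :
    Continuous fun x => (G x).starProjection := by
  refine continuous_iff_continuousAt.mpr fun x => tendsto_iff_norm_sub_tendsto_zero.mpr ?_
  have hlim : Tendsto (fun y => 2 * (H * dist y x ^ ν)) (𝓝 x) (𝓝 0) := by
    have hcont : Continuous fun y => 2 * (H * dist y x ^ ν) := by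
      fun_prop (disch := exact hν.le)
    simpa [Real.zero_rpow hν.ne'] using hcont.tendsto x
  exact squeeze_zero (fun _ => norm_nonneg _)
    (fun y => (norm_starProjection_sub_starProjection_le _ _).trans (by gcongr; exact hG y x)) hlim

theorem infDist_inf_le {E F E' F' : Submodule ℝ 𝕍} {C : ℝ} (hC : 0 ≤ C)
    (hsplit : SplitsWithBound C E' F') {v : 𝕍} (hv : v ∈ E ⊓ F) (hv1 : ‖v‖ = 1) :
    infDist v ((E' ⊓ F' : Submodule ℝ 𝕍) : Set 𝕍) ≤ (1 + C) * (subDist E E' + subDist F F') := by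
  set p := E'.starProjection v
  set q := F'.starProjection v
  have hp : ‖v - p‖ ≤ subDist E E' := by
    simpa [hv1] using norm_sub_starProjection_le_subDist_mul (F := E') hv.1
  have hq : ‖v - q‖ ≤ subDist F F' := by
    simpa [hv1] using norm_sub_starProjection_le_subDist_mul (F := F') hv.2
  have hpq : ‖p - q‖ ≤ subDist E E' + subDist F F' := by
    calc ‖p - q‖ = ‖(v - q) - (v - p)‖ := by congr 1; abel
      _ ≤ ‖v - q‖ + ‖v - p‖ := norm_sub_le _ _
      _ ≤ _ := by linarith
  obtain ⟨a, ha, b, hb, hab, ha_le⟩ := hsplit (p - q)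
  have hmem : p - a ∈ E' ⊓ F' := ⟨E'.sub_mem (E'.starProjection_apply_mem v) ha,
    (show p - a = q + b by rw [← sub_add_cancel p q, ← hab]; abel) ▸
      F'.add_mem (F'.starProjection_apply_mem v) hb⟩
  have hd := subDist_nonneg F F'
  calc infDist v _ ≤ dist v (p - a) := infDist_le_dist_of_mem hmem
    _ = ‖(v - p) + a‖ := by rw [dist_eq_norm]; congr 1; abel
    _ ≤ ‖v - p‖ + ‖a‖ := norm_add_le _ _
    _ ≤ subDist E E' + C * (subDist E E' + subDist F F') := by
        gcongr; exact ha_le.trans (by gcongr)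
    _ ≤ (1 + C) * (subDist E E' + subDist F F') := by nlinarith

theorem subDist_inf_le {E F E' F' : Submodule ℝ 𝕍} {C : ℝ} (hC : 0 ≤ C)
    (hsplit : SplitsWithBound C E F) (hsplit' : SplitsWithBound C E' F') :
    subDist (E ⊓ F) (E' ⊓ F') ≤ (1 + C) * (subDist E E' + subDist F F') := by
  refine subDist_le (by have := subDist_nonneg E E'; have := subDist_nonneg F F'; positivity)
    (fun v hv hv1 => infDist_inf_le hC hsplit' hv hv1) fun v hv hv1 => ?_
  rw [subDist_comm E, subDist_comm F]
  exact infDist_inf_le hC hsplit hv hv1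

end SubDist

theorem exists_dist_rpow_le_mul_dist_rpow {K : Type*} [PseudoMetricSpace K] [BoundedSpace K]
    {ν₀ ν : ℝ} (hν₀ : 0 < ν₀) (hν : ν₀ ≤ ν) :
    ∃ D, 0 < D ∧ ∀ x y : K, dist x y ^ ν ≤ D * dist x y ^ ν₀ := by
  refine ⟨max 1 (diam (Set.univ : Set K) ^ ν), by positivity, fun x y => ?_⟩
  set r := dist x y
  rcases le_or_gt r 1 with hr1 | hr1
  · calc r ^ ν ≤ r ^ ν₀ := Real.rpow_le_rpow_of_exponent_ge' dist_nonneg hr1 hν₀.le hν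
      _ ≤ _ := le_mul_of_one_le_left (by positivity) (le_max_left _ _)
  · have hrD : r ≤ diam (Set.univ : Set K) :=
      dist_le_diam_of_mem (Bornology.isBounded_univ.mpr ‹_›) trivial trivial
    calc r ^ ν ≤ diam (Set.univ : Set K) ^ ν :=
        Real.rpow_le_rpow dist_nonneg hrD (hν₀.le.trans hν)
      _ ≤ max 1 (diam (Set.univ : Set K) ^ ν) := le_max_right _ _
      _ ≤ _ := le_mul_of_one_le_right (by positivity) (Real.one_le_rpow hr1.le hν₀.le)

theorem holder_intersection_of_grassmannian_maps_general
    {K : Type*} [MetricSpace K] [CompactSpace K]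
    {m : ℕ}
    (Fp Fm : K → Submodule ℝ (EuclideanSpace ℝ (Fin m)))
    (νp νm : ℝ) (hνp : 0 < νp) (hνm : 0 < νm)
    (Hp : ℝ) (hHp : 0 < Hp)
    (hHolderp : ∀ x y : K, subDist (Fp x) (Fp y) ≤ Hp * dist x y ^ νp)
    (Hm : ℝ) (hHm : 0 < Hm)
    (hHolderm : ∀ x y : K, subDist (Fm x) (Fm y) ≤ Hm * dist x y ^ νm)
    -- general position: F₊(x) + F₋(x) = ℝ^m
    (hgen : ∀ x : K, Fp x ⊔ Fm x = ⊤) :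
    ∃ H : ℝ, 0 < H ∧ ∀ x y : K,
      subDist (Fp x ⊓ Fm x) (Fp y ⊓ Fm y) ≤ H * dist x y ^ (min νp νm) := by
  obtain ⟨C, hC, hsplit⟩ := exists_splitsWithBound_of_continuous
    (continuous_starProjection_of_subDist_le_rpow hνp hHolderp)
    (continuous_starProjection_of_subDist_le_rpow hνm hHolderm) hgen
  obtain ⟨Dp, hDp, hp⟩ :=
    exists_dist_rpow_le_mul_dist_rpow (K := K) (lt_min hνp hνm) (min_le_left νp νm)
  obtain ⟨Dm, hDm, hm⟩ :=
    exists_dist_rpow_le_mul_dist_rpow (K := K) (lt_min hνp hνm) (min_le_right νp νm)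
  refine ⟨(1 + C) * (Hp * Dp + Hm * Dm), by positivity, fun x y => ?_⟩
  calc subDist (Fp x ⊓ Fm x) (Fp y ⊓ Fm y)
      ≤ (1 + C) * (subDist (Fp x) (Fp y) + subDist (Fm x) (Fm y)) :=
        subDist_inf_le hC (hsplit x) (hsplit y)
    _ ≤ (1 + C) * (Hp * (Dp * dist x y ^ min νp νm) + Hm * (Dm * dist x y ^ min νp νm)) := by
        gcongr
        · exact (hHolderp x y).trans (by gcongr; exact hp x y)
        · exact (hHolderm x y).trans (by gcongr; exact hm x y)
    _ = (1 + C) * (Hp * Dp + Hm * Dm) * dist x y ^ min νp νm := by ring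

theorem holder_intersection_of_grassmannian_maps
    {K : Type*} [MetricSpace K] [CompactSpace K]
    {m : ℕ} (hm : 1 ≤ m) (kp km : ℕ) (hk : m ≤ kp + km)
    (Fp Fm : K → Submodule ℝ (EuclideanSpace ℝ (Fin m)))
    (hdimp : ∀ x : K, Module.finrank ℝ (Fp x) = kp)
    (hdimm : ∀ x : K, Module.finrank ℝ (Fm x) = km)
    (νp νm : ℝ) (hνp : 0 < νp) (hνm : 0 < νm)
    (Hp : ℝ) (hHp : 0 < Hp)
    (hHolderp : ∀ x y : K, subDist (Fp x) (Fp y) ≤ Hp * dist x y ^ νp)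
    (Hm : ℝ) (hHm : 0 < Hm)
    (hHolderm : ∀ x y : K, subDist (Fm x) (Fm y) ≤ Hm * dist x y ^ νm)
    -- general position: F₊(x) + F₋(x) = ℝ^m
    (hgen : ∀ x : K, Fp x ⊔ Fm x = ⊤) :
    ∃ H : ℝ, 0 < H ∧ ∀ x y : K,
      subDist (Fp x ⊓ Fm x) (Fp y ⊓ Fm y) ≤ H * dist x y ^ (min νp νm) :=
  holder_intersection_of_grassmannian_maps_general Fp Fm νp νm hνp hνm Hp hHp hHolderp Hm hHm
    hHolderm hgen
end

section
/- Let (M,d) be a metric space, f:M→M a Lipschitz map with Lipschitz constant L≥1 preserving a Borel probability measure μ, and let 𝒫 be a countable partition of M into measurable sets (modulo μ-null sets). Denote by 𝒫(x) the atom of 𝒫 containing x, and set 𝒫_n(x):=∩_{i=0}^{n-1} f^{-i}(𝒫(f^i(x))) for n≥1. Assume that dist(x, M∖𝒫(x))>0 for μ-a.e. x and that the function θ(x):=−log dist(x, M∖𝒫(x)) is μ-integrable. Then there exists ξ∈(0,1) such that for μ-almost every x∈M there is a constant c(x)>0 with B(x, c(x)·ξ^n) ⊆ 𝒫_n(x)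 for all n≥1; that is, the atoms of the refined partitions 𝒫_n do not shrink at a rate faster than exponential. -/
open MeasureTheory Metric

/-- The atom of the countable partition `P` containing `x` (empty if `x` lies in no atom). -/
def atomOf {M : Type*} (P : ℕ → Set M) (x : M) : Set M :=
  ⋃ (n : ℕ) (_ : x ∈ P n), P n

/-- The atom at `x` of the refinement `𝒫_n = 𝒫 ∨ f⁻¹𝒫 ∨ … ∨ f^{-(n-1)}𝒫`. -/
def refinedAtom {M : Type*} (P : ℕ → Set M) (f : M → M) (n : ℕ) (x : M) : Set M :=
  ⋂ i ∈ Finset.range n, (f^[i]) ⁻¹' (atomOf P (f^[i] x))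

theorem refined_atoms_shrink_at_most_exponentially
    {M : Type*} [MetricSpace M] [MeasurableSpace M] [BorelSpace M]
    (μ : Measure M) [IsProbabilityMeasure μ]
    (f : M → M) (L : ℝ) (hL : 1 ≤ L)
    (hf : ∀ x y : M, dist (f x) (f y) ≤ L * dist x y)
    (hfμ : MeasurePreserving f μ μ)
    (P : ℕ → Set M)
    (hPmeas : ∀ n, MeasurableSet (P n))
    (hPdisj : Pairwise (Function.onFun Disjoint P))
    (hPcover : μ ((⋃ n, P n)ᶜ) = 0)
    (hpos : ∀ᵐ x ∂μ, 0 < infDist x ((atomOf P x)ᶜ))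
    (hint : Integrable (fun x => -Real.log (infDist x ((atomOf P x)ᶜ))) μ) :
    ∃ ξ : ℝ, 0 < ξ ∧ ξ < 1 ∧
      ∀ᵐ x ∂μ, ∃ c : ℝ, 0 < c ∧
        ∀ n : ℕ, 1 ≤ n → ball x (c * ξ ^ n) ⊆ refinedAtom P f n x := by
  set θ : M → ℝ := fun x => -Real.log (infDist x ((atomOf P x)ᶜ)) with hθdef
  have hL0 : (0:ℝ) < L := lt_of_lt_of_le one_pos hL
  -- measurable version of θ
  set g : M → ℝ := hint.1.mk _ with hgdef
  have hgsm : StronglyMeasurable g := hint.1.stronglyMeasurable_mk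
  have hθg : θ =ᵐ[μ] g := hint.1.ae_eq_mk
  have hgint : Integrable g μ := hint.congr hθg
  set G : M → ℝ := fun x => max (g x) 0 with hGdef
  have hGmeas : Measurable G := hgsm.measurable.max measurable_const
  have hGint : Integrable G μ := hgint.pos_part
  -- Borel–Cantelli sum
  have A : (∑' j : ℕ, μ {y | G y ∈ Set.Ioi (j : ℝ)}) < ⊤ := by
    letI : MeasureSpace M := ⟨μ⟩
    haveI : IsProbabilityMeasure (volume : Measure M) := ‹IsProbabilityMeasure μ›
    exact ProbabilityTheory.tsum_prob_mem_Ioi_lt_top hGint (fun x => le_max_right _ _)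
  have hsum : (∑' n : ℕ, μ ((f^[n]) ⁻¹' {y | (n:ℝ) < G y})) ≠ ⊤ := by
    have : ∀ n : ℕ, μ ((f^[n]) ⁻¹' {y | (n:ℝ) < G y}) = μ {y | G y ∈ Set.Ioi (n:ℝ)} := by
      intro n
      exact (hfμ.iterate n).measure_preimage
        (hGmeas measurableSet_Ioi).nullMeasurableSet
    rw [tsum_congr this]
    exact A.ne
  have hBC : ∀ᵐ x ∂μ, ∀ᶠ n in Filter.atTop, x ∉ (f^[n]) ⁻¹' {y | (n:ℝ) < G y} :=
    ae_eventually_notMem hsum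
  -- transfer of a.e. properties along iterates
  have hqmp : ∀ n : ℕ, Measure.QuasiMeasurePreserving (f^[n]) μ μ :=
    fun n => (hfμ.iterate n).quasiMeasurePreserving
  have htrans : ∀ᵐ x ∂μ, ∀ n : ℕ, θ (f^[n] x) = g (f^[n] x) :=
    ae_all_iff.2 fun n => (hqmp n).ae hθg
  have hposit : ∀ᵐ x ∂μ, ∀ n : ℕ, 0 < infDist (f^[n] x) ((atomOf P (f^[n] x))ᶜ) :=
    ae_all_iff.2 fun n => (hqmp n).ae hpos
  -- choose ξ
  have he1 : (1:ℝ) ≤ Real.exp 1 := Real.one_le_exp zero_le_one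
  have hLe : (1:ℝ) < L * Real.exp 1 := by
    nlinarith [Real.exp_one_gt_d9]
  refine ⟨(L * Real.exp 1)⁻¹, inv_pos.2 (lt_trans one_pos hLe),
    inv_lt_one_of_one_lt₀ hLe, ?_⟩
  filter_upwards [hBC, htrans, hposit] with x hx1 hx2 hx3
  obtain ⟨N, hN⟩ := Filter.eventually_atTop.1 hx1
  -- bound θ (f^[i] x) ≤ K + i  for all i
  set K : ℝ := max ((Finset.range (N+1)).sup' (by simp) fun i => θ (f^[i] x) - i) 0 with hKdef
  have hK0 : 0 ≤ K := le_max_right _ _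
  have hKbound : ∀ i : ℕ, θ (f^[i] x) ≤ K + i := by
    intro i
    rcases le_or_gt i N with h | h
    · have hmem' : i ∈ Finset.range (N + 1) := Finset.mem_range.2 (Nat.lt_succ_of_le h)
      have h1 : θ (f^[i] x) - (i:ℝ) ≤
          (Finset.range (N + 1)).sup' (by simp) (fun j => θ (f^[j] x) - (j:ℝ)) :=
        Finset.le_sup' (fun j => θ (f^[j] x) - (j:ℝ)) hmem'
      have : θ (f^[i] x) - i ≤ K := le_max_of_le_left h1
      linarith
    · have hGi : ¬ ((i:ℝ) < G (f^[i] x)) := hN i h.le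
      have : θ (f^[i] x) = g (f^[i] x) := hx2 i
      have : θ (f^[i] x) ≤ i := by
        rw [this]
        exact le_trans (le_max_left _ _) (not_lt.1 hGi)
      linarith
  -- lower bound on infDist at iterates
  have hdistlb : ∀ i : ℕ, Real.exp (-(K + i)) ≤ infDist (f^[i] x) ((atomOf P (f^[i] x))ᶜ) := by
    intro i
    have hdp := hx3 i
    have : Real.exp (-θ (f^[i] x)) = infDist (f^[i] x) ((atomOf P (f^[i] x))ᶜ) := by
      simp only [hθdef, neg_neg]
      exact Real.exp_log hdp
    rw [← this]
    exact Real.exp_le_exp.2 (neg_le_neg (hKbound i))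
  refine ⟨Real.exp (-K), Real.exp_pos _, fun n hn y hy => ?_⟩
  simp only [refinedAtom, Set.mem_iInter, Finset.mem_range]
  intro i hi
  -- distance bound for iterates
  have hiter : ∀ j : ℕ, dist (f^[j] y) (f^[j] x) ≤ L ^ j * dist y x := by
    intro j
    induction j with
    | zero => simp
    | succ k ih =>
      rw [Function.iterate_succ_apply', Function.iterate_succ_apply']
      calc dist (f (f^[k] y)) (f (f^[k] x)) ≤ L * dist (f^[k] y) (f^[k] x) := hf _ _
        _ ≤ L * (L ^ k * dist y x) := mul_le_mul_of_nonneg_left ih hL0.le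
        _ = L ^ (k + 1) * dist y x := by ring
  have hyd : dist y x < Real.exp (-K) * ((L * Real.exp 1)⁻¹) ^ n := mem_ball.1 hy
  have key : dist (f^[i] y) (f^[i] x) < Real.exp (-(K + i)) := by
    have h1 : dist (f^[i] y) (f^[i] x) ≤ L ^ i * dist y x := hiter i
    have h2 : L ^ i * dist y x < L ^ i * (Real.exp (-K) * ((L * Real.exp 1)⁻¹) ^ n) := by
      apply mul_lt_mul_of_pos_left hyd (pow_pos hL0 i)
    have h3 : L ^ i * (Real.exp (-K) * ((L * Real.exp 1)⁻¹) ^ n) ≤ Real.exp (-(K + i)) := by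
      have hmono : (L * Real.exp 1) ^ i ≤ (L * Real.exp 1) ^ n :=
        pow_le_pow_right₀ hLe.le hi.le
      have hpowpos : (0:ℝ) < (L * Real.exp 1) ^ n := pow_pos (lt_trans one_pos hLe) n
      have hEi : (0:ℝ) < Real.exp 1 ^ i := pow_pos (Real.exp_pos 1) i
      have h4 : L ^ i / (L * Real.exp 1) ^ n ≤ 1 / Real.exp 1 ^ i := by
        rw [div_le_div_iff₀ hpowpos hEi, one_mul, ← mul_pow]
        exact hmono
      calc L ^ i * (Real.exp (-K) * ((L * Real.exp 1)⁻¹) ^ n)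
          = Real.exp (-K) * (L ^ i / (L * Real.exp 1) ^ n) := by
            rw [inv_pow]; ring
        _ ≤ Real.exp (-K) * (1 / Real.exp 1 ^ i) :=
            mul_le_mul_of_nonneg_left h4 (Real.exp_pos _).le
        _ = Real.exp (-(K + i)) := by
            rw [one_div, Real.exp_one_pow, ← Real.exp_neg, ← Real.exp_add]
            ring_nf
    exact lt_of_le_of_lt h1 (lt_of_lt_of_le h2 h3)
  have hmem : f^[i] y ∈ atomOf P (f^[i] x) := by
    by_contra hc
    have := infDist_le_dist_of_mem (x := f^[i] x) (s := (atomOf P (f^[i] x))ᶜ) hc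
    rw [dist_comm] at this
    exact absurd (lt_of_le_of_lt this key) (not_lt.2 (hdistlb i))
  exact hmem
end
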